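/- arXiv:2506.22097 — 6 statements merged into one kernel-verified Lean document; each statement's English description precedes it below -/
import Mathlib

section
/- Let F be a field of characteristic ≠ 2, P the upper-triangular Borel subgroup of G = GL₂(F), H = { [[a,b],[b,a]] : a² − b² ≠ 0 }, q = [[1,−1],[1,1]], and w = [[0,1],[1,0]]. Then G is the disjoint union of the double cosets PH, PqH, and PwqH. -/
/-!
Since `p * g` has bottom row `c • (bottom row of g)` for `p ∈ P`, the cosets `P * g` are the
points `[u : v]` of the projective line of bottom rows, and `P \ G / H` is the set of `H`-orbits
on it. In the coordinates `(u + v, u - v)` the matrix `!![x, y; y, x]` acts diagonally by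
`(x + y, x - y)`, so the orbits are `u + v = 0`, `u - v = 0` (distinct points as `2 ≠ 0`) and the
rest; they contain the bottom rows of `w * q`, `q` and `1`.
-/

open Matrix DoubleCoset

namespace GL2

section CommRing

variable {R : Type*} [CommRing R]

variable (R) in
def borel : Set (GL (Fin 2) R) :=
  {p | ∃ a b c : R, (p : Matrix (Fin 2) (Fin 2) R) = !![a, b; 0, c]}

variable (R) in
def circulant : Set (GL (Fin 2) R) :=
  {h | ∃ a b : R, (h : Matrix (Fin 2) (Fin 2) R) = !![a, b; b, a]}

def bottomSum (M : Matrix (Fin 2) (Fin 2) R) : R := M 1 0 + M 1 1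

def bottomDiff (M : Matrix (Fin 2) (Fin 2) R) : R := M 1 0 - M 1 1

lemma bottomSum_mul_mul (a b c x y : R) (M : Matrix (Fin 2) (Fin 2) R) :
    bottomSum (!![a, b; 0, c] * M * !![x, y; y, x]) = c * bottomSum M * (x + y) := by
  simp only [bottomSum, mul_apply, Fin.sum_univ_two, of_apply, cons_val', cons_val_zero,
    cons_val_one, empty_val', cons_val_fin_one]
  ring

lemma bottomDiff_mul_mul (a b c x y : R) (M : Matrix (Fin 2) (Fin 2) R) :
    bottomDiff (!![a, b; 0, c] * M * !![x, y; y, x]) = c * bottomDiff M * (x - y) := by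
  simp only [bottomDiff, mul_apply, Fin.sum_univ_two, of_apply, cons_val', cons_val_zero,
    cons_val_one, empty_val', cons_val_fin_one]
  ring

lemma isUnit_of_val_eq_upper {p : GL (Fin 2) R} {a b c : R}
    (hp : (p : Matrix (Fin 2) (Fin 2) R) = !![a, b; 0, c]) : IsUnit c := by
  have h := (isUnit_iff_isUnit_det _).1 p.isUnit
  rw [hp, det_fin_two_of, mul_zero, sub_zero] at h
  exact isUnit_of_mul_isUnit_right h

lemma isUnit_add_and_sub_of_val_eq_circulant {h : GL (Fin 2) R} {x y : R}
    (hh : (h : Matrix (Fin 2) (Fin 2) R) = !![x, y; y, x]) : IsUnit (x + y) ∧ IsUnit (x - y) := by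
  have hd := (isUnit_iff_isUnit_det _).1 h.isUnit
  rw [hh, det_fin_two_of, show x * x - y * y = (x + y) * (x - y) by ring] at hd
  exact IsUnit.mul_iff.1 hd

variable {g m m₁ m₂ : GL (Fin 2) R}

lemma bottomSum_eq_zero_iff_of_mem_doubleCoset (hg : g ∈ doubleCoset m (borel R) (circulant R)) :
    bottomSum (g : Matrix _ _ R) = 0 ↔ bottomSum (m : Matrix _ _ R) = 0 := by
  obtain ⟨p, ⟨a, b, c, hp⟩, h, ⟨x, y, hh⟩, rfl⟩ := mem_doubleCoset.1 hg
  rw [Units.val_mul, Units.val_mul, hp, hh, bottomSum_mul_mul,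
    (isUnit_add_and_sub_of_val_eq_circulant hh).1.mul_left_eq_zero,
    (isUnit_of_val_eq_upper hp).mul_right_eq_zero]

lemma bottomDiff_eq_zero_iff_of_mem_doubleCoset (hg : g ∈ doubleCoset m (borel R) (circulant R)) :
    bottomDiff (g : Matrix _ _ R) = 0 ↔ bottomDiff (m : Matrix _ _ R) = 0 := by
  obtain ⟨p, ⟨a, b, c, hp⟩, h, ⟨x, y, hh⟩, rfl⟩ := mem_doubleCoset.1 hg
  rw [Units.val_mul, Units.val_mul, hp, hh, bottomDiff_mul_mul,
    (isUnit_add_and_sub_of_val_eq_circulant hh).2.mul_left_eq_zero,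
    (isUnit_of_val_eq_upper hp).mul_right_eq_zero]

lemma disjoint_doubleCoset_of_bottomSum
    (h₁ : bottomSum (m₁ : Matrix _ _ R) = 0)
    (h₂ : bottomSum (m₂ : Matrix _ _ R) ≠ 0) :
    Disjoint (doubleCoset m₁ (borel R) (circulant R))
      (doubleCoset m₂ (borel R) (circulant R)) :=
  Set.disjoint_left.2 fun _ hg₁ hg₂ ↦ h₂ <|
    (bottomSum_eq_zero_iff_of_mem_doubleCoset hg₂).1 <|
      (bottomSum_eq_zero_iff_of_mem_doubleCoset hg₁).2 h₁

lemma disjoint_doubleCoset_of_bottomDiff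
    (h₁ : bottomDiff (m₁ : Matrix _ _ R) = 0)
    (h₂ : bottomDiff (m₂ : Matrix _ _ R) ≠ 0) :
    Disjoint (doubleCoset m₁ (borel R) (circulant R))
      (doubleCoset m₂ (borel R) (circulant R)) :=
  Set.disjoint_left.2 fun _ hg₁ hg₂ ↦ h₂ <|
    (bottomDiff_eq_zero_iff_of_mem_doubleCoset hg₂).1 <|
      (bottomDiff_eq_zero_iff_of_mem_doubleCoset hg₁).2 h₁

lemma disjoint_doubleCosets_of_bottom_rows [Nontrivial R] (h2 : (2 : R) ≠ 0)
    (hm₁ : m₁ 1 = ![1, 1])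
    (hm₂ : m₂ 1 = ![1, -1]) :
    Disjoint (doubleCoset 1 (borel R) (circulant R)) (doubleCoset m₁ (borel R) (circulant R)) ∧
    Disjoint (doubleCoset 1 (borel R) (circulant R)) (doubleCoset m₂ (borel R) (circulant R)) ∧
    Disjoint (doubleCoset m₁ (borel R) (circulant R))
      (doubleCoset m₂ (borel R) (circulant R)) := by
  have hs₁ : bottomSum (m₁ : Matrix _ _ R) = 2 := by
    simp [bottomSum, hm₁, one_add_one_eq_two]
  have ht₁ : bottomDiff (m₁ : Matrix _ _ R) = 0 := by simp [bottomDiff, hm₁]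
  have hs₂ : bottomSum (m₂ : Matrix _ _ R) = 0 := by simp [bottomSum, hm₂]
  refine ⟨(disjoint_doubleCoset_of_bottomDiff ht₁ ?_).symm,
    (disjoint_doubleCoset_of_bottomSum hs₂ ?_).symm,
    (disjoint_doubleCoset_of_bottomSum hs₂ (hs₁ ▸ h2)).symm⟩ <;>
    simp [bottomSum, bottomDiff]

lemma mul_inv_mem_borel_of_row_eq_smul {g k : GL (Fin 2) R} {c : R}
    (hrow : g 1 = c • k 1) : g * k⁻¹ ∈ borel R := by
  have h10 : (g * k⁻¹ : GL (Fin 2) R) 1 0 = c * (k * k⁻¹ : GL (Fin 2) R) 1 0 := by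
    simp only [Units.val_mul, mul_apply, hrow, Pi.smul_apply, smul_eq_mul, Finset.mul_sum,
      mul_assoc]
  rw [mul_inv_cancel, Units.val_one, one_apply_ne (by decide), mul_zero] at h10
  exact ⟨_, _, _, (eta_fin_two _).trans (by rw [h10])⟩

lemma mem_doubleCoset_of_row_eq_smul {h : GL (Fin 2) R} (hh : h ∈ circulant R) {c : R}
    (hrow : g 1 = c • (m * h : GL (Fin 2) R) 1) :
    g ∈ doubleCoset m (borel R) (circulant R) :=
  mem_doubleCoset.2 ⟨g * (m * h)⁻¹, mul_inv_mem_borel_of_row_eq_smul hrow, h, hh, by group⟩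

lemma one_mem_circulant : (1 : GL (Fin 2) R) ∈ circulant R := ⟨1, 0, one_fin_two⟩

end CommRing

section Field

variable {F : Type*} [Field F] {g m m₁ m₂ : GL (Fin 2) F}

lemma mem_doubleCoset_one_of_bottomSum_ne_zero_of_bottomDiff_ne_zero
    (hs : bottomSum (g : Matrix _ _ F) ≠ 0) (ht : bottomDiff (g : Matrix _ _ F) ≠ 0) :
    g ∈ doubleCoset 1 (borel F) (circulant F) := by
  set u := g 1 0
  set v := g 1 1
  have hdet : (!![v, u; u, v] : Matrix (Fin 2) (Fin 2) F).det ≠ 0 := by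
    rw [det_fin_two_of, show v * v - u * u = -((u + v) * (u - v)) by ring]
    exact neg_ne_zero.2 (mul_ne_zero hs ht)
  refine mem_doubleCoset_of_row_eq_smul (h := .mkOfDetNeZero _ hdet) ⟨v, u, rfl⟩ (c := 1) ?_
  ext j
  fin_cases j <;> simp [u, v]

lemma mem_doubleCoset_of_bottomDiff_eq_zero (hm : m 1 = ![1, 1])
    (ht : bottomDiff (g : Matrix _ _ F) = 0) : g ∈ doubleCoset m (borel F) (circulant F) := by
  refine mem_doubleCoset_of_row_eq_smul one_mem_circulant (c := g 1 0) ?_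
  rw [mul_one, hm]
  ext j
  fin_cases j <;> simp [sub_eq_zero.1 ht]

lemma mem_doubleCoset_of_bottomSum_eq_zero (hm : m 1 = ![1, -1])
    (hs : bottomSum (g : Matrix _ _ F) = 0) : g ∈ doubleCoset m (borel F) (circulant F) := by
  refine mem_doubleCoset_of_row_eq_smul one_mem_circulant (c := g 1 0) ?_
  rw [mul_one, hm]
  ext j
  fin_cases j <;> simp [eq_neg_of_add_eq_zero_right hs]

lemma mem_doubleCoset_one_or_of_bottom_rows (hm₁ : m₁ 1 = ![1, 1]) (hm₂ : m₂ 1 = ![1, -1])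
    (g : GL (Fin 2) F) :
    g ∈ doubleCoset 1 (borel F) (circulant F) ∨
      g ∈ doubleCoset m₁ (borel F) (circulant F) ∨
      g ∈ doubleCoset m₂ (borel F) (circulant F) := by
  by_cases ht : bottomDiff (g : Matrix _ _ F) = 0
  · exact .inr (.inl (mem_doubleCoset_of_bottomDiff_eq_zero hm₁ ht))
  by_cases hs : bottomSum (g : Matrix _ _ F) = 0
  · exact .inr (.inr (mem_doubleCoset_of_bottomSum_eq_zero hm₂ hs))
  exact .inl (mem_doubleCoset_one_of_bottomSum_ne_zero_of_bottomDiff_ne_zero hs ht)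

end Field

end GL2

open GL2 in
theorem stmt3 (F : Type*) [Field F] (hchar : (2 : F) ≠ 0)
    (q w : GL (Fin 2) F)
    (hq : (q : Matrix (Fin 2) (Fin 2) F) = !![1, -1; 1, 1])
    (hw : (w : Matrix (Fin 2) (Fin 2) F) = !![0, 1; 1, 0])
    (P H : Set (GL (Fin 2) F))
    (hP : P = {p : GL (Fin 2) F | ∃ a b c : F,
        (p : Matrix (Fin 2) (Fin 2) F) = !![a, b; 0, c]})
    (hH : H = {h : GL (Fin 2) F | ∃ a b : F,
        (h : Matrix (Fin 2) (Fin 2) F) = !![a, b; b, a]}) :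
    (∀ g : GL (Fin 2) F,
        (∃ p ∈ P, ∃ h ∈ H, g = p * h) ∨
        (∃ p ∈ P, ∃ h ∈ H, g = p * q * h) ∨
        (∃ p ∈ P, ∃ h ∈ H, g = p * w * q * h)) ∧
    (¬ ∃ g : GL (Fin 2) F, (∃ p ∈ P, ∃ h ∈ H, g = p * h) ∧
        (∃ p ∈ P, ∃ h ∈ H, g = p * q * h)) ∧
    (¬ ∃ g : GL (Fin 2) F, (∃ p ∈ P, ∃ h ∈ H, g = p * h) ∧
        (∃ p ∈ P, ∃ h ∈ H, g = p * w * q * h)) ∧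
    (¬ ∃ g : GL (Fin 2) F, (∃ p ∈ P, ∃ h ∈ H, g = p * q * h) ∧
        (∃ p ∈ P, ∃ h ∈ H, g = p * w * q * h)) := by
  obtain rfl : P = borel F := hP
  obtain rfl : H = circulant F := hH
  have hq₁ : q 1 = ![1, 1] := by rw [hq]; rfl
  have hwq₁ : (w * q : GL (Fin 2) F) 1 = ![1, -1] := by
    rw [Units.val_mul, hw, hq, mul_fin_two]
    simp only [zero_mul, one_mul, mul_one, zero_add, add_zero]
    rfl
  have h_one (g : GL (Fin 2) F) : (∃ p ∈ borel F, ∃ h ∈ circulant F, g = p * h) ↔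
      g ∈ doubleCoset 1 (borel F) (circulant F) := by
    simp only [mem_doubleCoset, mul_one]
  have h_wq (g : GL (Fin 2) F) : (∃ p ∈ borel F, ∃ h ∈ circulant F, g = p * w * q * h) ↔
      g ∈ doubleCoset (w * q) (borel F) (circulant F) := by
    simp only [mem_doubleCoset, mul_assoc]
  simp only [h_one, h_wq, ← mem_doubleCoset, ← Set.not_disjoint_iff, not_not]
  exact ⟨mem_doubleCoset_one_or_of_bottom_rows hq₁ hwq₁,
    disjoint_doubleCosets_of_bottom_rows hchar hq₁ hwq₁⟩
end

section
/- Let F be a field and τ ∈ F× a non-square. Let G = GL₂(F), P the upper-triangular Borel subgroup, and H = { [[a,b],[τb,a]] : a² − τb² ≠ 0 }. Then G = PH, i.e. every g ∈ GL₂(F) can be written as g = p h with p ∈ P and h ∈ H. -/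
/-!
The bottom row `(c, d)` of `g` is nonzero, and `h = !![d, c/τ; c, d] ∈ H` has the same bottom
row; its determinant `d² − τ (c/τ)²` is nonzero because `τ` is not a square. Hence `g h⁻¹` has
bottom row `(0, 1)`, i.e. lies in `P`.
-/

open Matrix

namespace Matrix.GeneralLinearGroup

variable {n R : Type*} [Fintype n] [DecidableEq n] [CommRing R]

theorem row_ne_zero [Nontrivial R] (g : GL n R) (i : n) : (g : Matrix n n R) i ≠ 0 :=
  fun hi => g.det_ne_zero (det_eq_zero_of_row_eq_zero i (congrFun hi))

theorem row_mul_inv_of_row_eq (g h : GL n R) (i : n)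
    (hrow : (g : Matrix n n R) i = (h : Matrix n n R) i) :
    ((g * h⁻¹ : GL n R) : Matrix n n R) i = Pi.single i 1 := by
  ext j
  have hh : ((h * h⁻¹ : GL n R) : Matrix n n R) i j = (1 : Matrix n n R) i j := by
    rw [mul_inv_cancel]; rfl
  rw [Units.val_mul, mul_apply] at hh ⊢
  simp_rw [hrow, hh, one_apply, Pi.single_apply, eq_comm]

end Matrix.GeneralLinearGroup

theorem sq_sub_mul_sq_ne_zero {F : Type*} [Field F] {τ : F} (hns : ¬ ∃ x : F, x ^ 2 = τ)
    {a b : F} (hab : a ≠ 0 ∨ b ≠ 0) : a ^ 2 - τ * b ^ 2 ≠ 0 := by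
  intro h
  rcases eq_or_ne b 0 with rfl | hb
  · simp_all
  · exact hns ⟨a / b, by field_simp; linear_combination h⟩

theorem stmt4 (F : Type*) [Field F] (τ : F) (hτ : τ ≠ 0)
    (hns : ¬ ∃ x : F, x ^ 2 = τ) :
    ∀ g : GL (Fin 2) F, ∃ p h : GL (Fin 2) F,
      (∃ a b c : F, (p : Matrix (Fin 2) (Fin 2) F) = !![a, b; 0, c]) ∧
      (∃ a b : F, (h : Matrix (Fin 2) (Fin 2) F) = !![a, b; τ * b, a]) ∧
      g = p * h := by
  intro g
  set c := (g : Matrix (Fin 2) (Fin 2) F) 1 0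
  set d := (g : Matrix (Fin 2) (Fin 2) F) 1 1
  have hcd : d ≠ 0 ∨ c / τ ≠ 0 := by
    by_contra! hcd
    refine GeneralLinearGroup.row_ne_zero g 1 (funext fun j => ?_)
    fin_cases j
    · simpa [hτ] using hcd.2
    · exact hcd.1
  have hdet : !![d, c / τ; τ * (c / τ), d].det ≠ 0 := by
    rw [det_fin_two_of]
    convert sq_sub_mul_sq_ne_zero hns hcd using 1
    ring
  set h := GeneralLinearGroup.mkOfDetNeZero _ hdet
  have hrow : (g : Matrix (Fin 2) (Fin 2) F) 1 = (h : Matrix (Fin 2) (Fin 2) F) 1 := by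
    ext j
    fin_cases j <;> simp [h, c, d, mul_div_cancel₀ _ hτ]
  let p := g * h⁻¹
  refine ⟨p, h, ⟨p.val 0 0, p.val 0 1, 1, ?_⟩, ⟨d, c / τ, rfl⟩, (inv_mul_cancel_right g h).symm⟩
  rw [eta_fin_two p.val, GeneralLinearGroup.row_mul_inv_of_row_eq g h 1 hrow]
  simp
end

section
/- Let F be a field, G = GL₂(F), M the diagonal torus, and H = { [[a,b],[b,a]] : a² − b² ≠ 0 } (over F). Then for any matrix product AB with A = diag(a,b) (a,b in an extension field, ab ≠ 0) and B = [[c,d],[d,c]] (c,d in an extension field, c² − d² ≠ 0): if AB has all entries in F, then AB ∈ M(F)·H(F), i.e. AB can be written as a product of an F-rational diagonal invertible matrix and an F-rational matrix of the form [[x,y],[y,x]]. -/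
/-!
Write the product as `diag(a, b) B = diag(1, b / a) (a B)`. The entries of `a B` are `a c` and
`a d`, which are rational by hypothesis, and `b / a` is rational as the quotient `(b c) / (a c)` or
`(b d) / (a d)`, one of `c`, `d` being nonzero. Finally `(a c)² - (a d)² = a² (c² - d²) ≠ 0`.
-/

open Matrix

theorem Subfield.div_mem_of_mul_mem {E : Type*} [Field E] (K : Subfield E) {a b c : E}
    (hc : c ≠ 0) (hac : a * c ∈ K) (hbc : b * c ∈ K) : b / a ∈ K := by
  simpa only [mul_div_mul_right _ _ hc] using K.div_mem hbc hac

theorem Matrix.diag_fin_two_mul_eq_mul_smul {K : Type*} [Field K] {a : K} (ha : a ≠ 0) (b : K)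
    (B : Matrix (Fin 2) (Fin 2) K) :
    !![a, 0; 0, b] * B = !![1, 0; 0, b / a] * (a • B) := by
  ext i j
  fin_cases i <;> simp [Matrix.mul_apply, Fin.sum_univ_two]
  field_simp

theorem stmt5 (F E : Type*) [Field F] [Field E] [Algebra F E]
    (a b c d : E) (hab : a * b ≠ 0) (hcd : c ^ 2 - d ^ 2 ≠ 0)
    (hrat : ∀ i j, (!![a, 0; 0, b] * !![c, d; d, c] : Matrix (Fin 2) (Fin 2) E) i j
      ∈ Set.range (algebraMap F E)) :
    ∃ x y z w : F, x * y ≠ 0 ∧ z ^ 2 - w ^ 2 ≠ 0 ∧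
      (!![a, 0; 0, b] * !![c, d; d, c] : Matrix (Fin 2) (Fin 2) E) =
        ((!![x, 0; 0, y] * !![z, w; w, z] : Matrix (Fin 2) (Fin 2) F)).map (algebraMap F E) := by
  obtain ⟨ha, hb⟩ := mul_ne_zero_iff.mp hab
  set K := (algebraMap F E).fieldRange
  -- membership in `fieldRange` unfolds to membership in `Set.range`
  have hK : ∀ i j, (!![a, 0; 0, b] * !![c, d; d, c]) i j ∈ K := hrat
  simp only [mul_fin_two, zero_mul, add_zero, zero_add, Fin.forall_fin_two, of_apply,
    cons_val', cons_val_zero, cons_val_one, empty_val', cons_val_fin_one] at hK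
  obtain ⟨⟨hac, had⟩, hbd, hbc⟩ := hK
  have hba : b / a ∈ K := by
    by_cases hc : c = 0
    · have hd : d ≠ 0 := by rintro rfl; simp [hc] at hcd
      exact K.div_mem_of_mul_mem hd had hbd
    · exact K.div_mem_of_mul_mem hc hac hbc
  obtain ⟨y, hy⟩ := hba
  obtain ⟨z, hz⟩ := hac
  obtain ⟨w, hw⟩ := had
  refine ⟨1, y, z, w, ?_, ?_, ?_⟩
  · rw [one_mul, ← map_ne_zero (algebraMap F E), hy]
    exact div_ne_zero hb ha
  · rw [← map_ne_zero (algebraMap F E)]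
    simp only [map_sub, map_pow, hz, hw]
    rw [show (a * c) ^ 2 - (a * d) ^ 2 = a ^ 2 * (c ^ 2 - d ^ 2) by ring]
    exact mul_ne_zero (pow_ne_zero 2 ha) hcd
  · rw [diag_fin_two_mul_eq_mul_smul ha, Matrix.map_mul]
    congr 1 <;> ext i j <;> fin_cases i <;> fin_cases j <;> simp [hy, hz, hw]
end

section
/- Let F be a non-archimedean local field (or any topological field in which F× is open and the determinant is continuous). Let P be the upper-triangular Borel of GL₂(F) and H = { [[a,b],[τb,a]] : a² − τb² ≠ 0 } for τ ∈ F×. Then the double coset PH is open in GL₂(F). -/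
/-! Multiplying on the left by an upper-triangular `p` scales the bottom row of a matrix by
`p 1 1`, and the bottom row `(τ b, a)` of `h ∈ H` has `τ a² - (τ b)² = τ det h`. Hence `g ∈ P H`
exactly when the bottom row `(u, v)` of `g` satisfies `τ v² - u² ≠ 0`: conversely, `h ∈ H` with
bottom row `τ (u, v)` exists, and `g h⁻¹ ∈ P`. This is the preimage of `F×` under a polynomial,
hence continuous, function of `g`. -/

open Matrix

section
variable {R : Type*} [CommRing R]

theorem exists_eq_upperTriangular_iff (M : Matrix (Fin 2) (Fin 2) R) :
    (∃ a b c : R, M = !![a, b; 0, c]) ↔ M 1 0 = 0 := by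
  refine ⟨?_, fun h => ⟨M 0 0, M 0 1, M 1 1, ?_⟩⟩
  · rintro ⟨a, b, c, rfl⟩
    rfl
  · rw [← h]
    exact eta_fin_two M

theorem upperTriangular_mul_apply_one (a b c : R) (M : Matrix (Fin 2) (Fin 2) R) (j : Fin 2) :
    (!![a, b; 0, c] * M) 1 j = c * M 1 j := by
  simp [mul_apply, Fin.sum_univ_two]

theorem mul_adjugate_apply_one_zero (M : Matrix (Fin 2) (Fin 2) R) (τ : R) :
    (M * adjugate !![τ * M 1 1, M 1 0; τ * M 1 0, τ * M 1 1]) 1 0 = 0 := by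
  simp [adjugate_fin_two_of, mul_apply, Fin.sum_univ_two]
  ring

end

theorem exists_upperTriangular_mul_torus_iff {F : Type*} [Field F] {τ : F} (hτ : τ ≠ 0)
    (g : GL (Fin 2) F) :
    (∃ p h : GL (Fin 2) F,
      (∃ a b c : F, (p : Matrix (Fin 2) (Fin 2) F) = !![a, b; 0, c]) ∧
      (∃ a b : F, (h : Matrix (Fin 2) (Fin 2) F) = !![a, b; τ * b, a]) ∧
      g = p * h) ↔
      τ * (g : Matrix (Fin 2) (Fin 2) F) 1 1 ^ 2 - (g : Matrix (Fin 2) (Fin 2) F) 1 0 ^ 2 ≠ 0 := by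
  constructor
  · rintro ⟨p, h, ⟨a, b, c, hp⟩, ⟨x, y, hh⟩, rfl⟩
    have hc : c ≠ 0 := by
      have hac : a * c ≠ 0 := by simpa [hp, det_fin_two_of] using p.det_ne_zero
      exact right_ne_zero_of_mul hac
    have hdet : x * x - y * (τ * y) ≠ 0 := by
      simpa [hh, det_fin_two_of] using h.det_ne_zero
    simp only [Units.val_mul, hp, upperTriangular_mul_apply_one, hh]
    have hform : τ * (c * x) ^ 2 - (c * (τ * y)) ^ 2 = c ^ 2 * τ * (x * x - y * (τ * y)) := by
      ring
    simpa [hform] using mul_ne_zero (mul_ne_zero (pow_ne_zero 2 hc) hτ) hdet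
  · set M := (g : Matrix (Fin 2) (Fin 2) F)
    intro hg
    have hdet : (!![τ * M 1 1, M 1 0; τ * M 1 0, τ * M 1 1]).det ≠ 0 := by
      have hform : τ * M 1 1 * (τ * M 1 1) - M 1 0 * (τ * M 1 0)
          = τ * (τ * M 1 1 ^ 2 - M 1 0 ^ 2) := by
        ring
      rw [det_fin_two_of, hform]
      exact mul_ne_zero hτ hg
    let h := GeneralLinearGroup.mkOfDetNeZero _ hdet
    refine ⟨g * h⁻¹, h, ?_, ⟨_, _, rfl⟩, (inv_mul_cancel_right g h).symm⟩
    rw [exists_eq_upperTriangular_iff, Units.val_mul, coe_units_inv, inv_def, mul_smul_comm,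
      Matrix.smul_apply]
    exact (congrArg _ (mul_adjugate_apply_one_zero M τ)).trans (smul_zero _)

theorem stmt13 (F : Type*) [Field F] [TopologicalSpace F] [IsTopologicalRing F]
    (hopen : IsOpen {x : F | x ≠ 0}) (τ : F) (hτ : τ ≠ 0) :
    IsOpen {g : GL (Fin 2) F | ∃ p h : GL (Fin 2) F,
      (∃ a b c : F, (p : Matrix (Fin 2) (Fin 2) F) = !![a, b; 0, c]) ∧
      (∃ a b : F, (h : Matrix (Fin 2) (Fin 2) F) = !![a, b; τ * b, a]) ∧
      g = p * h} := by
  simp_rw [exists_upperTriangular_mul_torus_iff hτ]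
  exact hopen.preimage (by fun_prop)
end

section
/- Let F be a field, τ ∈ F×. Define Θ : GL₂(F) → F by Θ(g) = d(w g w⁻¹ g⁻¹) where w = [[0,1],[τ,0]] (split case τ=1: w = [[0,1],[1,0]]) and d(g) denotes the (1,1)-entry of g. Then for the split case (τ = 1), H = { h : whw⁻¹ = h }: for all p = [[a,b],[0,c]] ∈ P, h ∈ H, and g ∈ GL₂(F), one has d(σ(pgh)(pgh)⁻¹) = (c/a) · d(σ(g)g⁻¹), where σ(x) = wxw⁻¹. -/
/-!
Since `h` commutes with `w`, it cancels from `σ(x) x⁻¹`, and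
`σ(pg) (pg)⁻¹ = σ(p) · σ(g) g⁻¹ · p⁻¹`. Here `σ(p) = !![c, 0; b, a]` is lower triangular and
`p⁻¹` is upper triangular with `(1,1)`-entry `a⁻¹`, so the `(1,1)`-entry of the product is
`c · d(σ(g) g⁻¹) · a⁻¹`.
-/

open Matrix

theorem mul_inv_conj_mul_of_conj_eq {G : Type*} [Group G] {w h : G} (hh : w * h * w⁻¹ = h)
    (p g : G) :
    w * (p * g * h) * w⁻¹ * (p * g * h)⁻¹ = (w * p * w⁻¹) * (w * g * w⁻¹ * g⁻¹) * p⁻¹ := by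
  have hcomm : h * w⁻¹ = w⁻¹ * h := by
    conv_rhs => rw [← hh]
    group
  calc w * (p * g * h) * w⁻¹ * (p * g * h)⁻¹ = w * p * g * (h * w⁻¹) * h⁻¹ * g⁻¹ * p⁻¹ := by
        group
    _ = (w * p * w⁻¹) * (w * g * w⁻¹ * g⁻¹) * p⁻¹ := by rw [hcomm]; group

namespace Matrix

theorem mul_mul_apply_of_row_col_eq_zero {n R : Type*} [Fintype n] [DecidableEq n]
    [NonUnitalNonAssocSemiring R] {L U : Matrix n n R} (X : Matrix n n R) {i : n}
    (hL : ∀ k ≠ i, L i k = 0) (hU : ∀ k ≠ i, U k i = 0) :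
    (L * X * U) i i = L i i * X i i * U i i := by
  rw [mul_apply, Finset.sum_eq_single i (fun k _ hk => by rw [hU k hk, mul_zero]) (by simp),
    mul_apply, Finset.sum_eq_single i (fun k _ hk => by rw [hL k hk, zero_mul]) (by simp)]

section UpperTriangular
variable {R : Type*} [CommRing R] {M P : Matrix (Fin 2) (Fin 2) R}

theorem apply_zero_zero_mul_of_mul_eq_one (hMP : M * P = 1) (hP : P 1 0 = 0) :
    M 0 0 * P 0 0 = 1 := by
  simpa [mul_apply, hP] using congrFun (congrFun hMP 0) 0

theorem apply_one_zero_of_mul_eq_one (hMP : M * P = 1) (hP : P 1 0 = 0) : M 1 0 = 0 := by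
  have h10 : M 1 0 * P 0 0 = 0 := by simpa [mul_apply, hP] using congrFun (congrFun hMP 1) 0
  calc M 1 0 = M 1 0 * P 0 0 * M 0 0 := by
        rw [mul_assoc, mul_comm (P 0 0), apply_zero_zero_mul_of_mul_eq_one hMP hP, mul_one]
    _ = 0 := by rw [h10, zero_mul]

end UpperTriangular

theorem GeneralLinearGroup.inv_eq_self_of_eq_swap {R : Type*} [CommRing R] {w : GL (Fin 2) R}
    (hw : (w : Matrix (Fin 2) (Fin 2) R) = !![0, 1; 1, 0]) : w⁻¹ = w := by
  rw [inv_eq_iff_mul_eq_one]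
  ext i j
  fin_cases i <;> fin_cases j <;> simp [hw]

end Matrix

theorem stmt16_general (F : Type*) [Field F]
    (w : GL (Fin 2) F) (hw : (w : Matrix (Fin 2) (Fin 2) F) = !![0, 1; 1, 0])
    (a b c : F)
    (p : GL (Fin 2) F) (hp : (p : Matrix (Fin 2) (Fin 2) F) = !![a, b; 0, c])
    (h : GL (Fin 2) F) (hh : w * h * w⁻¹ = h)
    (g : GL (Fin 2) F) :
    ((w * (p * g * h) * w⁻¹ * (p * g * h)⁻¹ : GL (Fin 2) F) :
        Matrix (Fin 2) (Fin 2) F) 0 0 =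
      a⁻¹ * c * ((w * g * w⁻¹ * g⁻¹ : GL (Fin 2) F) : Matrix (Fin 2) (Fin 2) F) 0 0 := by
  have hσp : ((w * p * w⁻¹ : GL (Fin 2) F) : Matrix (Fin 2) (Fin 2) F) = !![c, 0; b, a] := by
    rw [GeneralLinearGroup.inv_eq_self_of_eq_swap hw, Units.val_mul, Units.val_mul, hw, hp]
    simp
  have hp10 : (p : Matrix (Fin 2) (Fin 2) F) 1 0 = 0 := by simp [hp]
  have hpinv00 : ((p⁻¹ : GL (Fin 2) F) : Matrix (Fin 2) (Fin 2) F) 0 0 = a⁻¹ := by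
    have := apply_zero_zero_mul_of_mul_eq_one p.inv_mul hp10
    rw [hp] at this
    exact eq_inv_of_mul_eq_one_left this
  rw [mul_inv_conj_mul_of_conj_eq hh, Units.val_mul, Units.val_mul,
    mul_mul_apply_of_row_col_eq_zero _ (fun k hk => by simp [hσp, Fin.eq_one_of_ne_zero k hk])
      (fun k hk => by rw [Fin.eq_one_of_ne_zero k hk, apply_one_zero_of_mul_eq_one p.inv_mul hp10]),
    hσp, hpinv00]
  simp only [of_apply, cons_val', cons_val_zero, empty_val', cons_val_fin_one]
  ring

theorem stmt16 (F : Type*) [Field F]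
    (w : GL (Fin 2) F) (hw : (w : Matrix (Fin 2) (Fin 2) F) = !![0, 1; 1, 0])
    (a b c : F) (ha : a ≠ 0) (hc : c ≠ 0)
    (p : GL (Fin 2) F) (hp : (p : Matrix (Fin 2) (Fin 2) F) = !![a, b; 0, c])
    (h : GL (Fin 2) F) (hh : w * h * w⁻¹ = h)
    (g : GL (Fin 2) F) :
    ((w * (p * g * h) * w⁻¹ * (p * g * h)⁻¹ : GL (Fin 2) F) :
        Matrix (Fin 2) (Fin 2) F) 0 0 =
      a⁻¹ * c * ((w * g * w⁻¹ * g⁻¹ : GL (Fin 2) F) : Matrix (Fin 2) (Fin 2) F) 0 0 :=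
  stmt16_general F w hw a b c p hp h hh g
end

section
/- Let F be a field, w = [[0,1],[1,0]], σ(g) = wgw⁻¹, d(g) = the (1,1)-entry of g. Then for g ∈ GL₂(F): d(σ(g)g⁻¹) ≠ 0 if and only if g ∈ PH, where P is the upper-triangular Borel and H is the σ-fixed subgroup { [[a,b],[b,a]] : a²−b² ≠ 0 }. (Assume char F ≠ 2.) -/
/-! For `g = !![A, B; C, D]`, the `(0, 0)` entry of `w g w⁻¹ g⁻¹` is `(D² - C²) / det g`.
The bottom row of `p * h`, with `p = !![a, b; 0, c]` and `h = !![x, y; y, x]`, is `(c y, c x)`,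
so `D² - C² = c² (x² - y²) ≠ 0` on `PH`. Conversely, if `D² ≠ C²` then `h = !![D, C; C, D]`
is invertible and `g h⁻¹` is upper triangular: its `(1, 0)` entry is `(C D - D C) / det h`. -/

open Matrix

section

variable {F : Type*} [Field F]

theorem swap_mul_mul_swap_mul_inv_apply_zero_zero (M : Matrix (Fin 2) (Fin 2) F) :
    (!![0, 1; 1, 0] * M * !![0, 1; 1, 0] * M⁻¹ : Matrix (Fin 2) (Fin 2) F) 0 0 =
      (M 1 1 ^ 2 - M 1 0 ^ 2) / M.det := by
  rw [eta_fin_two M, inv_def, adjugate_fin_two_of, det_fin_two_of, Ring.inverse_eq_inv']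
  simp only [mul_apply, Fin.sum_univ_two, Matrix.smul_apply, smul_eq_mul, of_apply, cons_val',
    cons_val_zero, cons_val_one, cons_val_fin_one]
  ring

theorem exists_upperTriangular_mul_circulant_iff (g : GL (Fin 2) F) :
    (∃ p h : GL (Fin 2) F,
        (∃ a b c : F, (p : Matrix (Fin 2) (Fin 2) F) = !![a, b; 0, c]) ∧
        (∃ a b : F, (h : Matrix (Fin 2) (Fin 2) F) = !![a, b; b, a]) ∧
        g = p * h) ↔
      (g : Matrix (Fin 2) (Fin 2) F) 1 1 ^ 2 - (g : Matrix (Fin 2) (Fin 2) F) 1 0 ^ 2 ≠ 0 := by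
  constructor
  · rintro ⟨p, h, ⟨a, b, c, hp⟩, ⟨x, y, hh⟩, rfl⟩
    have hc : c ≠ 0 := by
      have := p.det_ne_zero
      rw [hp, det_fin_two_of, mul_zero, sub_zero] at this
      exact right_ne_zero_of_mul this
    have hxy : x * x - y * y ≠ 0 := by simpa [hh, det_fin_two_of] using h.det_ne_zero
    have hbottom : ((p * h : GL (Fin 2) F) : Matrix (Fin 2) (Fin 2) F) 1 1 ^ 2 -
        ((p * h : GL (Fin 2) F) : Matrix (Fin 2) (Fin 2) F) 1 0 ^ 2 = c ^ 2 * (x * x - y * y) := by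
      simp only [Units.val_mul, hp, hh, mul_apply, Fin.sum_univ_two, of_apply, cons_val',
        cons_val_zero, cons_val_one, cons_val_fin_one]
      ring
    rw [hbottom]
    exact mul_ne_zero (pow_ne_zero 2 hc) hxy
  · intro hg
    set C := (g : Matrix (Fin 2) (Fin 2) F) 1 0
    set D := (g : Matrix (Fin 2) (Fin 2) F) 1 1
    let h := GeneralLinearGroup.mkOfDetNeZero !![D, C; C, D] <| by
      rw [det_fin_two_of]; convert hg using 1; ring
    set p := ((g * h⁻¹ : GL (Fin 2) F) : Matrix (Fin 2) (Fin 2) F)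
    have hp : p 1 0 = 0 := by
      simp only [p, h, Units.val_mul, coe_units_inv, GeneralLinearGroup.val_mkOfDetNeZero, inv_def,
        det_fin_two_of, Ring.inverse_eq_inv', adjugate_fin_two_of, mul_apply, Fin.sum_univ_two,
        Matrix.smul_apply, smul_eq_mul, of_apply, cons_val', cons_val_zero, cons_val_one,
        cons_val_fin_one]
      ring
    refine ⟨g * h⁻¹, h, ⟨p 0 0, p 0 1, p 1 1, ?_⟩, ⟨D, C, rfl⟩, by group⟩
    rw [← hp]
    exact eta_fin_two p

end

theorem stmt17_general (F : Type*) [Field F]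
    (w : GL (Fin 2) F) (hw : (w : Matrix (Fin 2) (Fin 2) F) = !![0, 1; 1, 0])
    (g : GL (Fin 2) F) :
    ((w * g * w⁻¹ * g⁻¹ : GL (Fin 2) F) : Matrix (Fin 2) (Fin 2) F) 0 0 ≠ 0 ↔
      ∃ p h : GL (Fin 2) F,
        (∃ a b c : F, (p : Matrix (Fin 2) (Fin 2) F) = !![a, b; 0, c]) ∧
        (∃ a b : F, (h : Matrix (Fin 2) (Fin 2) F) = !![a, b; b, a]) ∧
        g = p * h := by
  have hw_inv : w⁻¹ = w := inv_eq_of_mul_eq_one_right <| Units.ext <| by simp [hw, one_fin_two]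
  rw [exists_upperTriangular_mul_circulant_iff, hw_inv, Units.val_mul, Units.val_mul, Units.val_mul,
    coe_units_inv, hw, swap_mul_mul_swap_mul_inv_apply_zero_zero, div_ne_zero_iff]
  exact and_iff_left g.det_ne_zero

theorem stmt17 (F : Type*) [Field F] (hchar : (2 : F) ≠ 0)
    (w : GL (Fin 2) F) (hw : (w : Matrix (Fin 2) (Fin 2) F) = !![0, 1; 1, 0])
    (g : GL (Fin 2) F) :
    ((w * g * w⁻¹ * g⁻¹ : GL (Fin 2) F) : Matrix (Fin 2) (Fin 2) F) 0 0 ≠ 0 ↔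
      ∃ p h : GL (Fin 2) F,
        (∃ a b c : F, (p : Matrix (Fin 2) (Fin 2) F) = !![a, b; 0, c]) ∧
        (∃ a b : F, (h : Matrix (Fin 2) (Fin 2) F) = !![a, b; b, a]) ∧
        g = p * h :=
  stmt17_general F w hw g
end
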